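/- With notation as in the previous statement, |η_{k+1} - P(y_{k+1} = 1 | Σ = s)| summed against the distribution of Σ equals η_{k+1}(1-η_{k+1})·∑_{s=0}^{k+1} |P(Z_k = s) - P(Z_k = s-1)|. -/

import Mathlib

/-!
Write `Σ = Z + Y` with `Z = Z_k` and `Y = y_{k+1}` independent. Since `Y ∈ {0, 1}`,
`P(Σ = s) = (1 - η) P(Z = s) + η P(Z = s - 1)` and `P(Y = 1, Σ = s) = η P(Z = s - 1)`, so each
summand `P(Σ = s) |η - P(Y = 1, Σ = s) / P(Σ = s)|` equals
`|η P(Σ = s) - η P(Z = s - 1)| = η (1 - η) |P(Z = s) - P(Z = s - 1)|`.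
Reading `Z = s - 1` as an event about `(Z : ℤ)` makes it empty at `s = 0`, so no case split on
`s` is needed.
-/

open MeasureTheory ProbabilityTheory

lemma mul_abs_sub_div_eq_abs_mul_sub {q a : ℝ} (e : ℝ) (hq : 0 ≤ q) (ha : q = 0 → a = 0) :
    q * |e - a / q| = |q * e - a| := by
  rcases hq.eq_or_lt with rfl | hq
  · simp [ha rfl]
  · rw [← abs_of_pos hq, ← abs_mul, abs_of_pos hq, mul_sub, mul_div_cancel₀ _ hq.ne']

lemma mixture_mul_abs_sub_div {e p₁ p₀ : ℝ} (he : e ∈ Set.Icc (0 : ℝ) 1) (hp₁ : 0 ≤ p₁)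
    (hp₀ : 0 ≤ p₀) :
    (p₁ * (1 - e) + p₀ * e) * |e - p₀ * e / (p₁ * (1 - e) + p₀ * e)|
      = e * (1 - e) * |p₁ - p₀| := by
  obtain ⟨he₀, he₁⟩ := he
  have hpe₁ : 0 ≤ p₁ * (1 - e) := mul_nonneg hp₁ (sub_nonneg.mpr he₁)
  have hpe₀ : 0 ≤ p₀ * e := mul_nonneg hp₀ he₀
  rw [mul_abs_sub_div_eq_abs_mul_sub e (add_nonneg hpe₁ hpe₀) (fun h => by linarith),
    show (p₁ * (1 - e) + p₀ * e) * e - p₀ * e = e * (1 - e) * (p₁ - p₀) by ring,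
    abs_mul, abs_of_nonneg (mul_nonneg he₀ (sub_nonneg.mpr he₁))]

lemma ProbabilityTheory.iIndepFun.indepFun_sum_castSucc_last {Ω β : Type*} [MeasurableSpace Ω]
    {μ : Measure Ω} [MeasurableSpace β] [AddCommMonoid β] [MeasurableAdd₂ β] {k : ℕ}
    {y : Fin (k + 1) → Ω → β} (hind : iIndepFun y μ) (hmeas : ∀ i, Measurable (y i)) :
    IndepFun (fun ω => ∑ i : Fin k, y i.castSucc ω) (y (Fin.last k)) μ := by
  have hnot : Fin.last k ∉ Finset.univ.map Fin.castSuccEmb := by simp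
  convert hind.indepFun_finsetSum_of_notMem hmeas hnot using 1
  ext ω
  simp [Finset.sum_map]

section AddBernoulli

variable {Ω : Type*} {Z Y : Ω → ℕ}

lemma setOf_add_eq_of_le_one (hY : ∀ ω, Y ω ≤ 1) (s : ℕ) :
    {ω | Z ω + Y ω = s}
      = {ω | Z ω = s} ∩ {ω | Y ω = 0} ∪ {ω | (Z ω : ℤ) = s - 1} ∩ {ω | Y ω = 1} := by
  ext ω
  have := hY ω
  simp only [Set.mem_ofPred_eq, Set.mem_inter_iff, Set.mem_union]
  omega

lemma setOf_eq_one_inter_add_eq (s : ℕ) :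
    {ω | Y ω = 1} ∩ {ω | Z ω + Y ω = s} = {ω | (Z ω : ℤ) = s - 1} ∩ {ω | Y ω = 1} := by
  ext ω
  simp only [Set.mem_ofPred_eq, Set.mem_inter_iff]
  omega

variable [MeasurableSpace Ω] {μ : Measure Ω}

lemma measure_add_eq_of_le_one (hind : IndepFun Z Y μ) (hZ : Measurable Z) (hY : Measurable Y)
    (hY₁ : ∀ ω, Y ω ≤ 1) (s : ℕ) :
    μ {ω | Z ω + Y ω = s}
      = μ {ω | Z ω = s} * μ {ω | Y ω = 0} + μ {ω | (Z ω : ℤ) = s - 1} * μ {ω | Y ω = 1} := by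
  have hdisj : Disjoint ({ω | Z ω = s} ∩ {ω | Y ω = 0})
      ({ω | (Z ω : ℤ) = s - 1} ∩ {ω | Y ω = 1}) :=
    Set.disjoint_left.mpr fun ω h₀ h₁ => by
      simp only [Set.mem_inter_iff, Set.mem_ofPred_eq] at h₀ h₁
      omega
  rw [setOf_add_eq_of_le_one hY₁, measure_union hdisj
    ((hZ (.of_discrete (s := {n : ℕ | (n : ℤ) = s - 1}))).inter
      (hY (measurableSet_singleton 1)))]
  congr 1
  · exact hind.measure_inter_preimage_eq_mul {s} {0} .of_discrete .of_discrete
  · exact hind.measure_inter_preimage_eq_mul {n : ℕ | (n : ℤ) = s - 1} {1} .of_discrete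
      .of_discrete

lemma toReal_measure_eq_zero_of_le_one [IsProbabilityMeasure μ] {e : ℝ} (hY : Measurable Y)
    (hY₁ : ∀ ω, Y ω ≤ 1) (he : e ∈ Set.Icc (0 : ℝ) 1)
    (hbern : μ {ω | Y ω = 1} = ENNReal.ofReal e) :
    (μ {ω | Y ω = 0}).toReal = 1 - e := by
  have hcompl : {ω | Y ω = 0} = {ω | Y ω = 1}ᶜ := by
    ext ω
    have := hY₁ ω
    simp only [Set.mem_ofPred_eq, Set.mem_compl_iff]
    omega
  rw [hcompl, prob_compl_eq_one_sub (s := {ω | Y ω = 1}) (hY (measurableSet_singleton 1)), hbern,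
    ENNReal.toReal_sub_of_le (ENNReal.ofReal_le_one.mpr he.2) ENNReal.one_ne_top,
    ENNReal.toReal_one, ENNReal.toReal_ofReal he.1]

lemma toReal_measure_mul_abs_sub_cond_eq [IsProbabilityMeasure μ] {e : ℝ}
    (hind : IndepFun Z Y μ) (hZ : Measurable Z) (hY : Measurable Y) (hY₁ : ∀ ω, Y ω ≤ 1)
    (he : e ∈ Set.Icc (0 : ℝ) 1)
    (hbern : μ {ω | Y ω = 1} = ENNReal.ofReal e) (s : ℕ) :
    (μ {ω | Z ω + Y ω = s}).toReal *
        |e - (μ ({ω | Y ω = 1} ∩ {ω | Z ω + Y ω = s})).toReal / (μ {ω | Z ω + Y ω = s}).toReal|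
      = e * (1 - e) * |(μ {ω | Z ω = s}).toReal - (μ {ω | (Z ω : ℤ) = s - 1}).toReal| := by
  have hY₁e : (μ {ω | Y ω = 1}).toReal = e := by rw [hbern, ENNReal.toReal_ofReal he.1]
  have hprod : μ ({ω | (Z ω : ℤ) = s - 1} ∩ {ω | Y ω = 1})
      = μ {ω | (Z ω : ℤ) = s - 1} * μ {ω | Y ω = 1} :=
    hind.measure_inter_preimage_eq_mul {n : ℕ | (n : ℤ) = s - 1} {1} .of_discrete .of_discrete
  rw [setOf_eq_one_inter_add_eq, hprod, measure_add_eq_of_le_one hind hZ hY hY₁,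
    ENNReal.toReal_add (by finiteness) (by finiteness)]
  simp only [ENNReal.toReal_mul]
  rw [toReal_measure_eq_zero_of_le_one hY hY₁ he hbern, hY₁e]
  exact mixture_mul_abs_sub_div he ENNReal.toReal_nonneg ENNReal.toReal_nonneg

end AddBernoulli

/-- With `Σ = ∑_{i=1}^{k+1} yᵢ` a sum of independent Bernoulli(ηᵢ) variables and
`Z_k = ∑_{j=1}^k y_j`, the expectation over `Σ` of `|η_{k+1} - P(y_{k+1}=1 | Σ)|`
equals `η_{k+1}(1-η_{k+1}) ∑_{s=0}^{k+1} |P(Z_k = s) - P(Z_k = s-1)|`. -/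
theorem stmt_16 {Ω : Type*} [MeasurableSpace Ω] (μ : Measure Ω) [IsProbabilityMeasure μ]
    (k : ℕ) (η : Fin (k + 1) → ℝ) (hη : ∀ i, η i ∈ Set.Icc (0:ℝ) 1)
    (y : Fin (k + 1) → Ω → ℕ)
    (hmeas : ∀ i, Measurable (y i)) (hval : ∀ i ω, y i ω ≤ 1)
    (hind : iIndepFun y μ)
    (hbern : ∀ i, μ {ω | y i ω = 1} = ENNReal.ofReal (η i)) :
    ∑ s ∈ Finset.range (k + 2),
        (μ {ω | ∑ i, y i ω = s}).toReal *
          |η (Fin.last k) -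
            (μ ({ω | y (Fin.last k) ω = 1} ∩ {ω | ∑ i, y i ω = s})).toReal /
              (μ {ω | ∑ i, y i ω = s}).toReal|
      = η (Fin.last k) * (1 - η (Fin.last k)) *
          ∑ s ∈ Finset.range (k + 2),
            |(μ {ω | ∑ i : Fin k, y i.castSucc ω = s}).toReal -
              (μ {ω | ((∑ i : Fin k, y i.castSucc ω : ℕ) : ℤ) = (s : ℤ) - 1}).toReal| := by
  have hZ : Measurable fun ω => ∑ i : Fin k, y i.castSucc ω :=
    Finset.measurable_sum _ fun i _ => hmeas _
  simp only [Fin.sum_univ_castSucc, Finset.mul_sum]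
  exact Finset.sum_congr rfl fun s _ =>
    toReal_measure_mul_abs_sub_cond_eq (hind.indepFun_sum_castSucc_last hmeas) hZ (hmeas _)
      (hval _) (hη _) (hbern _) s
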